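/- arXiv:2112.09819 — 2 statements merged into one kernel-verified Lean document; each statement's English description precedes it below -/
import Mathlib

section
/- Let p > 0 be a real number. Then every complex solution z of the equation ((p + iz)/(p − iz)) e^{2πiz} = 1 is real; moreover, every nonzero real solution x satisfies x cos(πx) + p sin(πx) = 0. -/
open scoped Real

/-- All complex solutions of `((p + iz)/(p - iz)) e^{2πiz} = 1` are real, and every
nonzero real solution `x` satisfies `x cos(πx) + p sin(πx) = 0`. -/
theorem koshliakov_roots_real (p : ℝ) (hp : 0 < p) :
    (∀ z : ℂ, ((p + Complex.I * z) / (p - Complex.I * z)) * Complex.exp (2 * π * Complex.I * z) = 1 →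
      z.im = 0) ∧
    (∀ x : ℝ, x ≠ 0 →
      ((p + Complex.I * x) / (p - Complex.I * x)) * Complex.exp (2 * π * Complex.I * x) = 1 →
      x * Real.cos (π * x) + p * Real.sin (π * x) = 0) := by
  constructor
  · intro z h
    have habs := congrArg (fun w : ℂ => ‖w‖) h
    rw [norm_mul, norm_div, Complex.norm_exp, norm_one] at habs
    have hb : ‖(p:ℂ) - Complex.I * z‖ ≠ 0 := by
      intro h0
      rw [h0] at habs
      simp at habs
    rw [div_mul_eq_mul_div, div_eq_one_iff_eq hb] at habs
    have h2 : (‖(p:ℂ) - Complex.I * z‖)^2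
        = (‖(p:ℂ) + Complex.I * z‖)^2 * (Real.exp ((2 * (π:ℂ) * Complex.I * z).re))^2 := by
      rw [← habs]; ring
    rw [Complex.sq_norm, Complex.sq_norm] at h2
    have hre : (2 * (π:ℂ) * Complex.I * z).re = -(2 * π * z.im) := by
      simp [Complex.mul_re, Complex.mul_im]
    rw [hre] at h2
    have hns1 : Complex.normSq ((p:ℂ) - Complex.I * z) = (p + z.im)^2 + z.re^2 := by
      simp [Complex.normSq_apply, Complex.sub_re, Complex.sub_im, Complex.mul_re, Complex.mul_im]
      ring
    have hns2 : Complex.normSq ((p:ℂ) + Complex.I * z) = (p - z.im)^2 + z.re^2 := by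
      simp [Complex.normSq_apply, Complex.add_re, Complex.add_im, Complex.mul_re, Complex.mul_im]
      ring
    rw [hns1, hns2] at h2
    set y := z.im
    set x := z.re
    by_contra hy
    rcases lt_or_gt_of_ne hy with hlt | hgt
    · -- y < 0, E = exp(-2πy) > 1
      have hE : 1 < Real.exp (-(2 * π * y)) := by
        rw [show (1:ℝ) = Real.exp 0 by simp]
        apply Real.exp_lt_exp.mpr
        have : 0 < 2 * π := by positivity
        nlinarith
      have hA : (p-y)^2 + x^2 ≤ ((p-y)^2 + x^2) * Real.exp (-(2*π*y))^2 :=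
        le_mul_of_one_le_right (by positivity) (by nlinarith)
      nlinarith [hA, mul_pos hp (neg_pos.mpr hlt)]
    · have hE : Real.exp (-(2 * π * y)) < 1 := by
        apply Real.exp_lt_one_iff.mpr
        have : 0 < 2 * π := by positivity
        nlinarith
      have hEpos := Real.exp_pos (-(2*π*y))
      have hA : ((p-y)^2 + x^2) * Real.exp (-(2*π*y))^2 ≤ (p-y)^2 + x^2 :=
        mul_le_of_le_one_right (by positivity) (by nlinarith)
      nlinarith [hA, mul_pos hp hgt]
  · intro x hx h
    have hb : ((p:ℂ) - Complex.I * x) ≠ 0 := by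
      intro h0
      have := congrArg Complex.im h0
      simp at this
      exact hx this
    rw [div_mul_eq_mul_div, div_eq_one_iff_eq hb] at h
    have hw : (2 * (π:ℂ) * Complex.I * x) = ((2 * π * x : ℝ) : ℂ) * Complex.I := by
      push_cast; ring
    rw [hw, Complex.exp_mul_I, ← Complex.ofReal_cos, ← Complex.ofReal_sin] at h
    have hre := congrArg Complex.re h
    have him := congrArg Complex.im h
    simp only [Complex.add_re, Complex.add_im, Complex.sub_re, Complex.sub_im,
      Complex.mul_re, Complex.mul_im, Complex.ofReal_re, Complex.ofReal_im,
      Complex.I_re, Complex.I_im] at hre him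
    ring_nf at hre him
    have hc : Real.cos (x * π * 2) = 2 * Real.cos (π * x)^2 - 1 := by
      rw [show x * π * 2 = 2 * (π * x) by ring, Real.cos_two_mul]
    have hs : Real.sin (x * π * 2) = 2 * Real.sin (π * x) * Real.cos (π * x) := by
      rw [show x * π * 2 = 2 * (π * x) by ring, Real.sin_two_mul]
    have hpy := Real.sin_sq_add_cos_sq (π * x)
    rw [hc, hs] at hre him
    have h1 : Real.sin (π*x) * (p * Real.sin (π*x) + x * Real.cos (π*x)) = 0 := by
      linear_combination (-(1:ℝ)/2) * hre + p * hpy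
    have h2 : Real.cos (π*x) * (p * Real.sin (π*x) + x * Real.cos (π*x)) = 0 := by
      linear_combination ((1:ℝ)/2) * him
    linear_combination Real.sin (π*x) * h1 + Real.cos (π*x) * h2
      - (p * Real.sin (π*x) + x * Real.cos (π*x)) * hpy
end

section
/- Let p > 0 be a real number. The set of nonnegative real solutions z of the equation ((p + iz)/(p − iz)) e^{2πiz} = 1 consists of 0 together with a sequence λ_1, λ_2, λ_3, …, where for each positive integer k one has k − 1/2 < λ_k < k and λ_k satisfies tan(πλ_k) = −λ_k/p. -/
open scoped Real

open Real Set in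
private lemma koshliakov_eq_iff_g (p : ℝ) (hp : 0 < p) (x : ℝ) :
    ((p + Complex.I * x) / (p - Complex.I * x)) * Complex.exp (2 * π * Complex.I * x) = 1 ↔
      p * Real.sin (π * x) + x * Real.cos (π * x) = 0 := by
  have hden : ((p:ℂ) - Complex.I * x) ≠ 0 := by
    intro h
    have := congrArg Complex.re h
    simp [Complex.sub_re, Complex.mul_re] at this
    exact hp.ne' this
  rw [div_mul_eq_mul_div, div_eq_one_iff_eq hden]
  have hexp : Complex.exp (2 * π * Complex.I * x) = Complex.exp ((2*π*x : ℝ) * Complex.I) := by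
    push_cast; ring_nf
  rw [hexp, Complex.exp_mul_I, ← Complex.ofReal_cos, ← Complex.ofReal_sin]
  simp only [Complex.ext_iff, Complex.add_re, Complex.add_im, Complex.mul_re, Complex.mul_im,
    Complex.sub_re, Complex.sub_im, Complex.I_re, Complex.I_im, Complex.ofReal_re,
    Complex.ofReal_im]
  set s := Real.sin (π * x)
  set c := Real.cos (π * x)
  have h2s : Real.sin (2*π*x) = 2 * s * c := by
    rw [show 2*π*x = 2*(π*x) by ring, Real.sin_two_mul]
  have h2c : Real.cos (2*π*x) = 2 * c^2 - 1 := by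
    rw [show 2*π*x = 2*(π*x) by ring, Real.cos_two_mul]
  have pyth : s^2 + c^2 = 1 := Real.sin_sq_add_cos_sq (π*x)
  rw [h2s, h2c]
  constructor
  · rintro ⟨e1, e2⟩
    have A : s * (p*s + x*c) = 0 := by linear_combination (-(1:ℝ)/2)*e1 + p*pyth
    have B : c * (p*s + x*c) = 0 := by linear_combination ((1:ℝ)/2)*e2
    linear_combination s*A + c*B + (-(p*s+x*c))*pyth
  · intro hg
    constructor
    · linear_combination (-2*s)*hg + 2*p*pyth
    · linear_combination 2*c*hg

open Real Set in
private lemma koshliakov_sin_shift (k : ℕ) : Real.sin (π * ((k:ℝ) - 1/2)) = -((-1:ℝ)^k) ∧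
    Real.cos (π * ((k:ℝ) - 1/2)) = 0 ∧ Real.sin (π * (k:ℝ)) = 0 ∧
    Real.cos (π * (k:ℝ)) = (-1:ℝ)^k := by
  have h1 : π * ((k:ℝ) - 1/2) = -(π/2) + (k:ℤ) * π := by push_cast; ring
  have h2 : π * (k:ℝ) = 0 + (k:ℤ) * π := by push_cast; ring
  rw [h1, h2, Real.sin_add_int_mul_pi, Real.cos_add_int_mul_pi,
    Real.sin_add_int_mul_pi, Real.cos_add_int_mul_pi]
  simp [zpow_natCast]

open Real Set in
private lemma koshliakov_exists_root (p : ℝ) (hp : 0 < p) (k : ℕ) (hk : 1 ≤ k) :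
    ∃ x, ((k:ℝ) - 1/2 < x ∧ x < k) ∧ p * Real.sin (π * x) + x * Real.cos (π * x) = 0 := by
  obtain ⟨hs, hc, hs2, hc2⟩ := koshliakov_sin_shift k
  have hsq : ((-1:ℝ)^k) * ((-1:ℝ)^k) = 1 := by
    rw [← pow_add, ← two_mul, pow_mul]; norm_num
  set G : ℝ → ℝ := fun x => (-1:ℝ)^k * (p * Real.sin (π * x) + x * Real.cos (π * x)) with hG
  have hcont : ContinuousOn G (Icc ((k:ℝ) - 1/2) k) := by fun_prop
  have hle : (k:ℝ) - 1/2 ≤ k := by norm_num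
  have hGa : G ((k:ℝ) - 1/2) = -p := by
    simp only [hG]; rw [hs, hc]; linear_combination (-p) * hsq
  have hGb : G (k:ℝ) = k := by
    simp only [hG]; rw [hs2, hc2]; linear_combination (k:ℝ) * hsq
  have h0 : (0:ℝ) ∈ Ioo (G ((k:ℝ)-1/2)) (G k) := by
    rw [hGa, hGb]
    refine ⟨by linarith, ?_⟩
    have : (1:ℝ) ≤ k := by exact_mod_cast hk
    linarith
  obtain ⟨x, hx, hGx⟩ := intermediate_value_Ioo hle hcont h0
  refine ⟨x, ⟨hx.1, hx.2⟩, ?_⟩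
  have hne : ((-1:ℝ)^k) ≠ 0 := by
    intro h; rw [h, mul_zero] at hsq; norm_num at hsq
  simpa [hG, hne] using hGx

open Real Set in
private lemma koshliakov_cos_ne (k : ℕ) {x : ℝ} (hx : (k:ℝ) - 1/2 < x) (hx' : x < k) :
    Real.cos (π * x) ≠ 0 := by
  intro h
  rw [Real.cos_eq_zero_iff] at h
  obtain ⟨n, hn⟩ := h
  have hπ := Real.pi_pos
  have hxn : x = n + 1/2 := by
    have : π * x = π * ((n:ℝ) + 1/2) := by rw [hn]; ring
    exact mul_left_cancel₀ hπ.ne' this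
  rw [hxn] at hx hx'
  have h1 : (k:ℤ) - 1 < n := by exact_mod_cast (by push_cast; linarith : ((k:ℤ):ℝ) - 1 < n)
  have h2 : n < (k:ℤ) := by exact_mod_cast (by push_cast; linarith : ((n:ℤ):ℝ) < (k:ℤ))
  omega

open Real Set in
private lemma koshliakov_tan_lt (k : ℕ) {x y : ℝ} (hx : (k:ℝ) - 1/2 < x) (hy : y < k)
    (hxy : x < y) : Real.tan (π * x) < Real.tan (π * y) := by
  have hπ := Real.pi_pos
  have e1 : Real.tan (π * x) = Real.tan (π * x - k * π) := (Real.tan_periodic.sub_nat_mul_eq k).symm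
  have e2 : Real.tan (π * y) = Real.tan (π * y - k * π) := (Real.tan_periodic.sub_nat_mul_eq k).symm
  rw [e1, e2]
  have hxm : π * x - k * π ∈ Ioo (-(π/2)) (π/2) := by
    constructor <;> nlinarith
  have hym : π * y - k * π ∈ Ioo (-(π/2)) (π/2) := by
    constructor <;> nlinarith
  exact Real.strictMonoOn_tan hxm hym (by nlinarith)

open Real Set in
private lemma koshliakov_root_loc (p : ℝ) (hp : 0 < p) {x : ℝ} (hx : 0 < x)
    (hg : p * Real.sin (π * x) + x * Real.cos (π * x) = 0) :
    ∃ k : ℕ, 1 ≤ k ∧ (k:ℝ) - 1/2 < x ∧ x < k := by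
  have hπ := Real.pi_pos
  obtain ⟨k, hk1, hxle, hxgt⟩ : ∃ k : ℕ, 1 ≤ k ∧ x ≤ k ∧ (k:ℝ) - 1 < x := by
    refine ⟨⌈x⌉₊, Nat.one_le_iff_ne_zero.mpr (by positivity), Nat.le_ceil x, ?_⟩
    have := Nat.ceil_lt_add_one hx.le
    linarith
  refine ⟨k, hk1, ?_, ?_⟩
  · by_contra hle
    push_neg at hle
    have hgt : (k:ℝ) - 1 < x := hxgt
    set n : ℤ := (k:ℤ) - 1 with hn
    have hs : Real.sin (π * x) = (-1:ℝ)^n * Real.sin (π * x - n * π) := by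
      rw [← Real.sin_add_int_mul_pi]; ring_nf
    have hc : Real.cos (π * x) = (-1:ℝ)^n * Real.cos (π * x - n * π) := by
      rw [← Real.cos_add_int_mul_pi]; ring_nf
    have hnx : ((n:ℝ)) = (k:ℝ) - 1 := by rw [hn]; push_cast; ring
    have hu1 : 0 < π * x - n * π := by rw [hnx]; nlinarith
    have hu2 : π * x - n * π ≤ π/2 := by rw [hnx]; nlinarith
    have hspos : 0 < Real.sin (π * x - n * π) :=
      Real.sin_pos_of_pos_of_lt_pi hu1 (by nlinarith)
    have hcnn : 0 ≤ Real.cos (π * x - n * π) :=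
      Real.cos_nonneg_of_mem_Icc ⟨by linarith, hu2⟩
    have hpos : 0 < p * Real.sin (π * x - n * π) + x * Real.cos (π * x - n * π) := by
      have : 0 ≤ x * Real.cos (π * x - n * π) := by positivity
      nlinarith
    rw [hs, hc] at hg
    have : (-1:ℝ)^n * (p * Real.sin (π * x - n * π) + x * Real.cos (π * x - n * π)) = 0 := by
      linear_combination hg
    rcases mul_eq_zero.mp this with h | h
    · have : ((-1:ℝ))^n ≠ 0 := by
        rcases Int.even_or_odd n with he | ho
        · rw [he.neg_one_zpow] at h ⊢; norm_num
        · rw [Odd.neg_one_zpow ho] at h ⊢; norm_num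
      exact this h
    · linarith
  · rcases lt_or_eq_of_le hxle with h | h
    · exact h
    · exfalso
      have hs2 : Real.sin (π * x) = 0 := by
        rw [h, mul_comm]; exact Real.sin_nat_mul_pi k
      have pyth := Real.sin_sq_add_cos_sq (π * x)
      rw [hs2] at hg pyth
      simp at hg pyth
      have hxne : x ≠ 0 := hx.ne'
      rcases hg with h' | h'
      · exact hxne h'
      · rw [h'] at pyth; norm_num at pyth

/-- The nonnegative real solutions of `((p + iz)/(p - iz)) e^{2πiz} = 1` consist of `0`
together with a sequence `λ_1, λ_2, …` with `k - 1/2 < λ_k < k` and `tan(π λ_k) = -λ_k / p`. -/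
theorem koshliakov_nonneg_roots (p : ℝ) (hp : 0 < p) :
    ∃ l : ℕ → ℝ,
      (∀ k : ℕ, 1 ≤ k →
        ((k : ℝ) - 1/2 < l k ∧ l k < k) ∧ Real.tan (π * l k) = -(l k) / p) ∧
      {x : ℝ | 0 ≤ x ∧
          ((p + Complex.I * x) / (p - Complex.I * x)) * Complex.exp (2 * π * Complex.I * x) = 1}
        = insert (0 : ℝ) (l '' {k : ℕ | 1 ≤ k}) := by
  choose f hf hg using fun k (h : 1 ≤ k) => koshliakov_exists_root p hp k h
  set l : ℕ → ℝ := fun k => if h : 1 ≤ k then f k h else 0 with hl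
  have hlk : ∀ k (h : 1 ≤ k), l k = f k h := by
    intro k h; simp [hl, h]
  have hbnd : ∀ (k : ℕ) (h : 1 ≤ k), ((k:ℝ) - 1/2 < l k ∧ l k < (k:ℝ)) := by
    intro k h; rw [hlk k h]; exact hf k h
  have hgl : ∀ k (h : 1 ≤ k), p * Real.sin (π * l k) + l k * Real.cos (π * l k) = 0 := by
    intro k h; rw [hlk k h]; exact hg k h
  have htan : ∀ k (h : 1 ≤ k), Real.tan (π * l k) = -(l k) / p := by
    intro k h
    have hc := koshliakov_cos_ne k (hbnd k h).1 (hbnd k h).2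
    rw [Real.tan_eq_sin_div_cos]
    rw [div_eq_div_iff hc hp.ne']
    linear_combination hgl k h
  refine ⟨l, fun k h => ⟨hbnd k h, htan k h⟩, ?_⟩
  ext x
  simp only [Set.mem_setOf_eq, Set.mem_insert_iff, Set.mem_image]
  rw [koshliakov_eq_iff_g p hp x]
  constructor
  · rintro ⟨hx0, hgx⟩
    rcases eq_or_lt_of_le hx0 with h | h
    · exact Or.inl h.symm
    · right
      obtain ⟨k, hk1, hk2, hk3⟩ := koshliakov_root_loc p hp h hgx
      refine ⟨k, hk1, ?_⟩
      have hc := koshliakov_cos_ne k hk2 hk3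
      have htx : Real.tan (π * x) = -x / p := by
        rw [Real.tan_eq_sin_div_cos, div_eq_div_iff hc hp.ne']
        linear_combination hgx
      rcases lt_trichotomy (l k) x with hlt | heq | hgt
      · exfalso
        have h1 := koshliakov_tan_lt k (hbnd k hk1).1 hk3 hlt
        rw [htx, htan k hk1, div_lt_div_iff₀ hp hp] at h1
        nlinarith
      · exact heq
      · exfalso
        have h1 := koshliakov_tan_lt k hk2 (hbnd k hk1).2 hgt
        rw [htx, htan k hk1, div_lt_div_iff₀ hp hp] at h1
        nlinarith
  · rintro (rfl | ⟨k, hk1, rfl⟩)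
    · refine ⟨le_refl 0, ?_⟩
      simp
    · have h1 := (hbnd k hk1).1
      have hk' : (1:ℝ) ≤ k := by exact_mod_cast hk1
      exact ⟨by linarith, hgl k hk1⟩
end
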